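/- Let (𝔄,Φ,σ) be transitive, λ a rational eigenvalue with locally determined eigenfunction f of radius r', and a ∈ 𝔄~. For z in Y_{r'+1}(a) define f_z(a) := f(a restricted to B(z,r')). Then for any two points x, z lying in the same trail-connected component of Y_{r'+1}(a), one has f_z(a) = λ^{z−x} · f_x(a); equivalently the displacement γ_{x,z}(λ) := λ^{x−z} f_z(a)/f_x(a) equals 1. -/

import Mathlib

open Topology MeasureTheory

/-- The configuration space `A^(ℤ^D)`, modelled as functions `(Fin D → ℤ) → A`. -/
abbrev Config (A : Type*) (D : ℕ) := (Fin D → ℤ) → A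

/-- Sup-norm of a lattice point `z ∈ ℤ^D`. -/
def normZ {D : ℕ} (z : Fin D → ℤ) : ℕ :=
  Finset.univ.sup fun i => (z i).natAbs

/-- The shift action: `(shift v a) z = a (z + v)`. -/
def shift {A : Type*} {D : ℕ} (v : Fin D → ℤ) (a : Config A D) : Config A D :=
  fun z => a (z + v)

/-- A subshift: a closed, shift-invariant subset of `A^(ℤ^D)`. -/
def IsSubshift {A : Type*} {D : ℕ} [TopologicalSpace A] (S : Set (Config A D)) : Prop :=
  IsClosed S ∧ ∀ v : Fin D → ℤ, shift v '' S = S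

/-- A cellular automaton of radius `r`: shift-commuting and locally determined
with radius `r`. -/
def IsCA {A : Type*} {D : ℕ} (Φ : Config A D → Config A D) (r : ℕ) : Prop :=
  (∀ (v : Fin D → ℤ) (a : Config A D), Φ (shift v a) = shift v (Φ a)) ∧
  ∀ (a b : Config A D) (z : Fin D → ℤ),
    (∀ w, normZ w ≤ r → a (z + w) = b (z + w)) → Φ a z = Φ b z

/-- The defect field `F_a(z)`: the largest radius `r` such that `a` restricted to
the ball `B(z,r)` agrees with (a translate of) some element of `S`. -/
noncomputable def defectField {A : Type*} {D : ℕ} (S : Set (Config A D))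
    (a : Config A D) (z : Fin D → ℤ) : ℕ∞ :=
  ⨆ (r : ℕ) (_ : ∃ b ∈ S, ∀ w, normZ w ≤ r → b (z + w) = a (z + w)), (r : ℕ∞)

/-- `𝔄~` : configurations with unbounded defect field. -/
def tildeSet {A : Type*} {D : ℕ} (S : Set (Config A D)) : Set (Config A D) :=
  {a | (⨆ z, defectField S a z) = ⊤}

/-- `Y_r(a) = { z : F_a(z) ≥ r }`, the non-defective region of range `r`. -/
def Yset {A : Type*} {D : ℕ} (S : Set (Config A D)) (a : Config A D) (r : ℕ) :
    Set (Fin D → ℤ) :=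
  {z | (r : ℕ∞) ≤ defectField S a z}

/-- `y` and `z` are connected by a trail inside `Y` (adjacency = sup-distance 1). -/
def TrailConn {D : ℕ} (Y : Set (Fin D → ℤ)) (y z : Fin D → ℤ) : Prop :=
  y ∈ Y ∧ Relation.ReflTransGen (fun p q => q ∈ Y ∧ normZ (q - p) = 1) y z

/-- A defect of `a` is removable if it can be erased by modifying `a` only near
the defective region. -/
def Removable {A : Type*} {D : ℕ} (S : Set (Config A D)) (a : Config A D) : Prop :=
  ∃ r : ℕ, 0 < r ∧ ∃ a' ∈ S, ∀ z ∈ Yset S a r, a' z = a z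

/-- The trail-connected component of `y` in `Y_r(a)` is projective: it meets
`Y_R(a)` for every `R`. -/
def Projective {A : Type*} {D : ℕ} (S : Set (Config A D)) (a : Config A D)
    (r : ℕ) (y : Fin D → ℤ) : Prop :=
  y ∈ Yset S a r ∧
    ∀ R : ℕ, ∃ w, TrailConn (Yset S a r) y w ∧ (R : ℕ∞) ≤ defectField S a w

/-- `λ^z = λ₁^{z₁} ⋯ λ_D^{z_D}`. -/
noncomputable def prodPow {D : ℕ} (l : Fin D → ℂ) (v : Fin D → ℤ) : ℂ :=
  ∏ i, l i ^ (v i)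

/-- A continuous `(Φ,σ)`-eigenfunction on `S` with generalized eigenvalue `(l0; l)`. -/
def IsEigenFun {A : Type*} {D : ℕ} [TopologicalSpace A] (S : Set (Config A D))
    (Φ : Config A D → Config A D) (l0 : ℂ) (l : Fin D → ℂ)
    (f : Config A D → ℂ) : Prop :=
  ContinuousOn f S ∧ (∃ a ∈ S, f a ≠ 0) ∧
  (∀ a ∈ S, f (Φ a) = l0 * f a) ∧
  ∀ a ∈ S, ∀ v : Fin D → ℤ, f (shift v a) = prodPow l v * f a

/-- The set `Spec(𝔄,Φ,σ)` of generalized eigenvalues (in the torus `𝕋^{D+1}`). -/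
def Spec' {A : Type*} {D : ℕ} [TopologicalSpace A] (S : Set (Config A D))
    (Φ : Config A D → Config A D) : Set (ℂ × (Fin D → ℂ)) :=
  {p | ‖p.1‖ = 1 ∧ (∀ i, ‖p.2 i‖ = 1) ∧
       ∃ f, IsEigenFun S Φ p.1 p.2 f}

/-- A continuous `σ`-eigenfunction on `S`. -/
def IsShiftEigenFun {A : Type*} {D : ℕ} [TopologicalSpace A] (S : Set (Config A D))
    (l : Fin D → ℂ) (f : Config A D → ℂ) : Prop :=
  ContinuousOn f S ∧ (∃ a ∈ S, f a ≠ 0) ∧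
  ∀ a ∈ S, ∀ v : Fin D → ℤ, f (shift v a) = prodPow l v * f a

/-- The group `Spec(𝔄,σ)` of shift eigenvalues. -/
def SpecSigma {A : Type*} {D : ℕ} [TopologicalSpace A] (S : Set (Config A D)) :
    Set (Fin D → ℂ) :=
  {l | (∀ i, ‖l i‖ = 1) ∧ ∃ f, IsShiftEigenFun S l f}

/-- Displacement `γ_{x,z}(λ) = λ^{x−z} f_z(a) / f_x(a)` of a dislocation. -/
noncomputable def disp {A : Type*} {D : ℕ} (l : Fin D → ℂ) (f : Config A D → ℂ)
    (a : Config A D) (x z : Fin D → ℤ) : ℂ :=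
  prodPow l (x - z) * f (shift z a) / f (shift x a)

/-- `C` is comeager relative to the subspace `S`. -/
def ComeagerIn {A : Type*} {D : ℕ} [TopologicalSpace A] (S C : Set (Config A D)) : Prop :=
  {x : S | (x : Config A D) ∈ C} ∈ residual S

/-- An a.e.-continuous (Baire-generically continuous), bounded, a.e.-nonzero
eigenfunction with eigenvalue `(l0; l)`, all equations holding comeagerly. -/
def IsAEEigenFun {A : Type*} {D : ℕ} [TopologicalSpace A] (S : Set (Config A D))
    (Φ : Config A D → Config A D) (l0 : ℂ) (l : Fin D → ℂ)
    (f : Config A D → ℂ) : Prop :=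
  (∃ M : ℝ, ∀ a ∈ S, ‖f a‖ ≤ M) ∧
  ComeagerIn S {a | ContinuousWithinAt f S a} ∧
  (¬ ComeagerIn S {a | f a = 0}) ∧
  ComeagerIn S {a | f (Φ a) = l0 * f a} ∧
  ∀ v : Fin D → ℤ, ComeagerIn S {a | f (shift v a) = prodPow l v * f a}

/-- The set `Spec_ae(𝔄,Φ,σ)` of a.e.-eigenvalues. -/
def SpecAE {A : Type*} {D : ℕ} [TopologicalSpace A] (S : Set (Config A D))
    (Φ : Config A D → Config A D) : Set (ℂ × (Fin D → ℂ)) :=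
  {p | ‖p.1‖ = 1 ∧ (∀ i, ‖p.2 i‖ = 1) ∧
       ∃ f, IsAEEigenFun S Φ p.1 p.2 f}

/-
Inside `Y_{r'+1}(a)` the configuration `a` agrees on each ball `B(q, r'+1)` with some `b ∈ 𝔄`.
If `p` is adjacent to `q`, the balls `B(p, r')` and `B(q, r')` both lie in `B(q, r'+1)`, so by
locality `f_p(a) = f(σ^p b)` and `f_q(a) = f(σ^q b)`, and the eigenfunction equation for `b` gives
`f_q(a) = λ^{q-p} f_p(a)`. The `λ_i` are roots of unity, hence nonzero, so `λ^{u+v} = λ^u λ^v`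
and these one-step relations compose along trails.
-/

lemma normZ_add_le {D : ℕ} (u v : Fin D → ℤ) : normZ (u + v) ≤ normZ u + normZ v :=
  Finset.sup_le fun i _ => (Int.natAbs_add_le _ _).trans <|
    add_le_add (Finset.le_sup (f := fun i => (u i).natAbs) (Finset.mem_univ i))
      (Finset.le_sup (f := fun i => (v i).natAbs) (Finset.mem_univ i))

lemma normZ_sub_comm {D : ℕ} (u v : Fin D → ℤ) : normZ (u - v) = normZ (v - u) :=
  Finset.sup_congr rfl fun i _ => by
    simp only [Pi.sub_apply, ← Int.natAbs_neg (u i - v i), neg_sub]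

lemma normZ_sub_le_succ_of_normZ_sub_eq_one {D : ℕ} {p q w : Fin D → ℤ} {r : ℕ}
    (hpq : normZ (q - p) = 1) (hw : normZ w ≤ r) : normZ (w + p - q) ≤ r + 1 :=
  calc normZ (w + p - q) = normZ (w + (p - q)) := by rw [add_sub_assoc]
    _ ≤ normZ w + normZ (p - q) := normZ_add_le _ _
    _ ≤ r + 1 := by rw [normZ_sub_comm, hpq]; omega

section prodPow

variable {D : ℕ} {l : Fin D → ℂ}

lemma prodPow_zero (l : Fin D → ℂ) : prodPow l 0 = 1 := by
  simp [prodPow]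

lemma prodPow_add (hl : ∀ i, l i ≠ 0) (u v : Fin D → ℤ) :
    prodPow l (u + v) = prodPow l u * prodPow l v := by
  simp only [prodPow, Pi.add_apply, zpow_add₀ (hl _), Finset.prod_mul_distrib]

lemma prodPow_sub_mul_prodPow_sub (hl : ∀ i, l i ≠ 0) (x y z : Fin D → ℤ) :
    prodPow l (z - y) * prodPow l (y - x) = prodPow l (z - x) := by
  rw [← prodPow_add hl, sub_add_sub_cancel]

end prodPow

section Configurations

variable {A : Type*} {D : ℕ}

lemma exists_eqOn_ball_of_mem_Yset_succ {S : Set (Config A D)} {a : Config A D} {r : ℕ}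
    {y : Fin D → ℤ} (hy : y ∈ Yset S a (r + 1)) :
    ∃ b ∈ S, ∀ w, normZ w ≤ r + 1 → b (y + w) = a (y + w) := by
  have hlt : (r : ℕ∞) < defectField S a y :=
    lt_of_lt_of_le (by exact_mod_cast Nat.lt_succ_self r) hy
  obtain ⟨s, hs⟩ := lt_iSup_iff.mp hlt
  obtain ⟨⟨b, hbS, hb⟩, hrs⟩ := lt_iSup_iff.mp hs
  have hrs : r + 1 ≤ s := by exact_mod_cast hrs
  exact ⟨b, hbS, fun w hw => hb w (hw.trans hrs)⟩

lemma apply_shift_eq_of_eqOn_ball {f : Config A D → ℂ} {r : ℕ}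
    (hloc : ∀ a b : Config A D, (∀ w, normZ w ≤ r → a w = b w) → f a = f b)
    {a b : Config A D} {y : Fin D → ℤ} (hab : ∀ w, normZ w ≤ r → a (y + w) = b (y + w)) :
    f (shift y a) = f (shift y b) :=
  hloc _ _ fun w hw => by simpa only [shift, add_comm] using hab w hw

variable {S : Set (Config A D)} {l : Fin D → ℂ} {f : Config A D → ℂ} {r : ℕ} {a : Config A D}

lemma apply_shift_eq_prodPow_mul_of_normZ_sub_eq_one
    (hshift : ∀ b ∈ S, ∀ v, f (shift v b) = prodPow l v * f b) (hl : ∀ i, l i ≠ 0)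
    (hloc : ∀ a b : Config A D, (∀ w, normZ w ≤ r → a w = b w) → f a = f b)
    {p q : Fin D → ℤ} (hq : q ∈ Yset S a (r + 1)) (hpq : normZ (q - p) = 1) :
    f (shift q a) = prodPow l (q - p) * f (shift p a) := by
  obtain ⟨b, hbS, hb⟩ := exists_eqOn_ball_of_mem_Yset_succ hq
  have hfq : f (shift q a) = f (shift q b) :=
    apply_shift_eq_of_eqOn_ball hloc fun w hw => (hb w (hw.trans r.le_succ)).symm
  have hfp : f (shift p a) = f (shift p b) := by
    refine apply_shift_eq_of_eqOn_ball hloc fun w hw => ?_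
    have h := hb (p + w - q) (by
      simpa only [add_comm p w] using normZ_sub_le_succ_of_normZ_sub_eq_one hpq hw)
    rwa [add_sub_cancel, eq_comm] at h
  rw [hfq, hfp, hshift b hbS q, hshift b hbS p, ← mul_assoc,
    ← prodPow_add hl, sub_add_cancel]

lemma apply_shift_eq_prodPow_mul_of_trailConn
    (hshift : ∀ b ∈ S, ∀ v, f (shift v b) = prodPow l v * f b) (hl : ∀ i, l i ≠ 0)
    (hloc : ∀ a b : Config A D, (∀ w, normZ w ≤ r → a w = b w) → f a = f b)
    {x z : Fin D → ℤ} (hxz : TrailConn (Yset S a (r + 1)) x z) :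
    f (shift z a) = prodPow l (z - x) * f (shift x a) := by
  obtain ⟨-, htrail⟩ := hxz
  induction htrail with
  | refl => rw [sub_self, prodPow_zero, one_mul]
  | tail _ hpq ih =>
    rw [apply_shift_eq_prodPow_mul_of_normZ_sub_eq_one hshift hl hloc hpq.1 hpq.2, ih,
      ← mul_assoc, prodPow_sub_mul_prodPow_sub hl]

end Configurations

theorem displacement_trivial_within_component_general {A : Type*} {D : ℕ}
    [TopologicalSpace A]
    (Φ : Config A D → Config A D)
    (S : Set (Config A D))
    (l0 : ℂ) (l : Fin D → ℂ)
    (hrat : (∃ n : ℕ, 0 < n ∧ l0 ^ n = 1) ∧ ∀ i, ∃ n : ℕ, 0 < n ∧ (l i) ^ n = 1)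
    (f : Config A D → ℂ) (heig : IsEigenFun S Φ l0 l f)
    (r' : ℕ)
    (hloc : ∀ a b : Config A D, (∀ w, normZ w ≤ r' → a w = b w) → f a = f b)
    (a : Config A D)
    (x z : Fin D → ℤ) (hconn : TrailConn (Yset S a (r' + 1)) x z) :
    f (shift z a) = prodPow l (z - x) * f (shift x a) := by
  have hl : ∀ i, l i ≠ 0 := fun i =>
    let ⟨n, hn, hpow⟩ := hrat.2 i
    (IsUnit.of_pow_eq_one hpow hn.ne').ne_zero
  exact apply_shift_eq_prodPow_mul_of_trailConn heig.2.2.2 hl hloc hconn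

/-- for a rational eigenvalue with locally determined
eigenfunction `f` of radius `r'`, two points in the same trail-connected
component of `Y_{r'+1}(a)` satisfy `f_z(a) = λ^{z−x} f_x(a)`. -/
theorem displacement_trivial_within_component {A : Type*} {D : ℕ} [Fintype A]
    [TopologicalSpace A] [DiscreteTopology A]
    (Φ : Config A D → Config A D) (R : ℕ) (hΦ : IsCA Φ R)
    (S : Set (Config A D)) (hS : IsSubshift S) (himg : Φ '' S = S)
    (htrans : ∃ a ∈ S, S ⊆ closure {b | ∃ (n : ℕ) (v : Fin D → ℤ),
      b = Φ^[n] (shift v a)})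
    (l0 : ℂ) (l : Fin D → ℂ)
    (hrat : (∃ n : ℕ, 0 < n ∧ l0 ^ n = 1) ∧ ∀ i, ∃ n : ℕ, 0 < n ∧ (l i) ^ n = 1)
    (f : Config A D → ℂ) (heig : IsEigenFun S Φ l0 l f)
    (r' : ℕ)
    (hloc : ∀ a b : Config A D, (∀ w, normZ w ≤ r' → a w = b w) → f a = f b)
    (hmod : ∀ a ∈ S, ‖f a‖ = 1)
    (a : Config A D) (ha : a ∈ tildeSet S)
    (x z : Fin D → ℤ) (hconn : TrailConn (Yset S a (r' + 1)) x z) :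
    f (shift z a) = prodPow l (z - x) * f (shift x a) :=
  displacement_trivial_within_component_general Φ S l0 l hrat f heig r' hloc a x z hconn
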